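/- arXiv:2407.13569 — 3 statements merged into one kernel-verified Lean document; each statement's English description precedes it below -/
import Mathlib

section
/- For 0 < a < 1, t ∈ [0,1), ε > 0, and z in the unit disc with |z - 1| < ε, the real part of (1-(1-t)z)^{a-1} is at least t^{1-a}/(t+ε)^{2(1-a)}. -/
/-!
Write `w = 1 - (1 - t) z = t + (1 - t)(1 - z)` and `θ = arg w`. Since `‖z‖ < 1` we have
`Re w > t ≥ 0`, so `|θ| ≤ π/2`, and `‖w‖ ≤ t + ε`. For `b = 1 - a ∈ [0, 1]`,
`Re (w ^ (-b)) = ‖w‖⁻ᵇ cos (b θ) ≥ ‖w‖⁻ᵇ (cos θ)ᵇ = (Re w)ᵇ / ‖w‖²ᵇ`, where the inequality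
combines weighted AM-GM with concavity of `cos` on `[-π/2, π/2]`.
-/

open Real Complex

theorem Real.cos_rpow_le_cos_mul {θ b : ℝ} (hθ : θ ∈ Set.Icc (-(π / 2)) (π / 2))
    (hb0 : 0 ≤ b) (hb1 : b ≤ 1) : Real.cos θ ^ b ≤ Real.cos (b * θ) := by
  have h0 : (0 : ℝ) ∈ Set.Icc (-(π / 2)) (π / 2) := by
    constructor <;> linarith [Real.pi_pos]
  have hamgm : Real.cos θ ^ b * (1 : ℝ) ^ (1 - b) ≤ b * Real.cos θ + (1 - b) * 1 :=
    Real.geom_mean_le_arith_mean2_weighted hb0 (by linarith)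
      (Real.cos_nonneg_of_mem_Icc hθ) zero_le_one (by ring)
  have hconcave := strictConcaveOn_cos_Icc.concaveOn.2 hθ h0 hb0 (by linarith : 0 ≤ 1 - b)
    (by ring)
  simp only [smul_eq_mul, mul_zero, add_zero, Real.cos_zero, mul_one, Real.one_rpow] at hamgm hconcave
  linarith

theorem Complex.re_rpow_div_norm_rpow_le_re_cpow_neg {w : ℂ} (hw : 0 < w.re) {b : ℝ}
    (hb0 : 0 ≤ b) (hb1 : b ≤ 1) : w.re ^ b / ‖w‖ ^ (2 * b) ≤ (w ^ (-(b : ℂ))).re := by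
  have hw0 : w ≠ 0 := fun h => by simp [h] at hw
  have hnorm : 0 < ‖w‖ := norm_pos_iff.mpr hw0
  have harg : arg w ∈ Set.Icc (-(π / 2)) (π / 2) :=
    Set.mem_Icc.mpr (abs_le.mp (abs_arg_le_pi_div_two_iff.mpr hw.le))
  have hre : (w ^ (-(b : ℂ))).re = ‖w‖ ^ (-b) * Real.cos (b * arg w) := by
    rw [← ofReal_neg, cpow_ofReal_re, mul_neg, Real.cos_neg, mul_comm (arg w)]
  calc w.re ^ b / ‖w‖ ^ (2 * b)
      = ‖w‖ ^ (-b) * (w.re / ‖w‖) ^ b := by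
        rw [Real.div_rpow hw.le hnorm.le, Real.rpow_neg hnorm.le, mul_comm 2 b,
          Real.rpow_mul hnorm.le, Real.rpow_two]
        field_simp
    _ ≤ ‖w‖ ^ (-b) * Real.cos (b * arg w) := by
        rw [← cos_arg hw0]
        gcongr
        exact Real.cos_rpow_le_cos_mul harg hb0 hb1
    _ = (w ^ (-(b : ℂ))).re := hre.symm

section

variable {t : ℝ} {z : ℂ}

theorem lt_re_one_sub_mul (ht : t < 1) (hz : ‖z‖ < 1) : t < (1 - (1 - (t : ℂ)) * z).re := by
  have hzre : z.re < 1 := (le_abs_self _).trans_lt ((abs_re_le_norm z).trans_lt hz)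
  simp only [sub_re, one_re, mul_re, sub_im, one_im, ofReal_re, ofReal_im, sub_zero, zero_mul]
  nlinarith

theorem norm_one_sub_mul_le (ht0 : 0 ≤ t) (ht1 : t ≤ 1) :
    ‖1 - (1 - (t : ℂ)) * z‖ ≤ t + ‖z - 1‖ := by
  calc ‖1 - (1 - (t : ℂ)) * z‖ = ‖(t : ℂ) + ((1 - t : ℝ) : ℂ) * (1 - z)‖ := by
        push_cast; ring_nf
    _ ≤ t + (1 - t) * ‖z - 1‖ := by
        refine (norm_add_le _ _).trans_eq ?_
        rw [norm_mul, norm_real, norm_real, Real.norm_of_nonneg ht0,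
          Real.norm_of_nonneg (by linarith), norm_sub_rev]
    _ ≤ t + ‖z - 1‖ := by nlinarith [norm_nonneg (z - 1)]

end

theorem stmt15_general (a t ε : ℝ) (ha0 : 0 < a) (ha1 : a < 1) (ht : t ∈ Set.Ico (0 : ℝ) 1)
    (z : ℂ) (hz : z ∈ Metric.ball (0 : ℂ) 1) (hze : ‖z - 1‖ < ε) :
    t ^ (1 - a) / (t + ε) ^ (2 * (1 - a)) ≤
      ((1 - (1 - (t : ℂ)) * z) ^ ((a : ℂ) - 1)).re := by
  obtain ⟨ht0, ht1⟩ := ht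
  set w : ℂ := 1 - (1 - (t : ℂ)) * z
  have hre : t < w.re := lt_re_one_sub_mul ht1 (by simpa using hz)
  have hnorm : ‖w‖ ≤ t + ε := (norm_one_sub_mul_le ht0 ht1.le).trans (by linarith)
  have hw : 0 < ‖w‖ := (ht0.trans_lt hre).trans_le (re_le_norm w)
  have hexp : (a : ℂ) - 1 = -((1 - a : ℝ) : ℂ) := by push_cast; ring
  calc t ^ (1 - a) / (t + ε) ^ (2 * (1 - a)) ≤ w.re ^ (1 - a) / ‖w‖ ^ (2 * (1 - a)) := by
        have hre0 : 0 ≤ w.re := ht0.trans hre.le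
        gcongr
    _ ≤ (w ^ ((a : ℂ) - 1)).re := by
        rw [hexp]
        exact re_rpow_div_norm_rpow_le_re_cpow_neg (ht0.trans_lt hre) (by linarith) (by linarith)

/-- For `0 < a < 1`, `t ∈ [0,1)`, `ε > 0` and `z ∈ 𝔻` with `|z-1| < ε`,
`Re((1-(1-t)z)^{a-1}) ≥ t^{1-a}/(t+ε)^{2(1-a)}` (principal branch). -/
theorem stmt15 (a t ε : ℝ) (ha0 : 0 < a) (ha1 : a < 1) (ht : t ∈ Set.Ico (0 : ℝ) 1)
    (hε : 0 < ε) (z : ℂ) (hz : z ∈ Metric.ball (0 : ℂ) 1) (hze : ‖z - 1‖ < ε) :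
    t ^ (1 - a) / (t + ε) ^ (2 * (1 - a)) ≤
      ((1 - (1 - (t : ℂ)) * z) ^ ((a : ℂ) - 1)).re :=
  stmt15_general a t ε ha0 ha1 ht z hz hze
end

section
/- For a > 1, t ∈ [0,1), and z in the unit disc, the real part of (1-(1-t)z)^{a-1} is at least t^{a-1}. -/
/-!
Write `w = 1 - (1 - t) z = ‖w‖ e^{iθ}` with `|θ| ≤ π/2`, since `Re w ≥ t ≥ 0`. For `0 ≤ σ ≤ 1`,
weighted AM-GM and concavity of `cos` on `[-π/2, π/2]` give
`cos θ ^ σ ≤ σ cos θ + (1 - σ) ≤ cos (σ θ)`, hence `(Re w)^σ ≤ ‖w‖^σ cos (σ θ) = Re (w^σ)`,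
and `t^σ ≤ (Re w)^σ` by monotonicity.
-/

open Real in
theorem Real.cos_rpow_le_cos_mul_s16 {θ σ : ℝ} (hθ : |θ| ≤ π / 2) (hσ₀ : 0 ≤ σ) (hσ₁ : σ ≤ 1) :
    cos θ ^ σ ≤ cos (θ * σ) := by
  have hθ' : θ ∈ Set.Icc (-(π / 2)) (π / 2) := abs_le.mp hθ
  have h0 : (0 : ℝ) ∈ Set.Icc (-(π / 2)) (π / 2) := ⟨by linarith [pi_pos], by linarith [pi_pos]⟩
  calc cos θ ^ σ = cos θ ^ σ * 1 ^ (1 - σ) := by rw [one_rpow, mul_one]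
    _ ≤ σ * cos θ + (1 - σ) * 1 :=
      geom_mean_le_arith_mean2_weighted hσ₀ (by linarith) (cos_nonneg_of_mem_Icc hθ') zero_le_one
        (by ring)
    _ = σ • cos θ + (1 - σ) • cos 0 := by simp
    _ ≤ cos (σ • θ + (1 - σ) • 0) :=
      strictConcaveOn_cos_Icc.concaveOn.2 hθ' h0 hσ₀ (by linarith) (by ring)
    _ = cos (θ * σ) := by simp [mul_comm]

theorem Complex.re_rpow_le_re_cpow {w : ℂ} (hw : 0 ≤ w.re) {σ : ℝ} (hσ₀ : 0 ≤ σ) (hσ₁ : σ ≤ 1) :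
    w.re ^ σ ≤ (w ^ (σ : ℂ)).re := by
  rw [cpow_ofReal_re, ← norm_mul_cos_arg, Real.mul_rpow (norm_nonneg w)
    (Real.cos_nonneg_of_mem_Icc (abs_le.mp (abs_arg_le_pi_div_two_iff.mpr hw)))]
  exact mul_le_mul_of_nonneg_left
    (Real.cos_rpow_le_cos_mul_s16 (abs_arg_le_pi_div_two_iff.mpr hw) hσ₀ hσ₁) (by positivity)

theorem le_re_one_sub_mul {t : ℝ} (ht : t ≤ 1) {z : ℂ} (hz : ‖z‖ ≤ 1) :
    t ≤ (1 - (1 - (t : ℂ)) * z).re := by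
  have : (1 - t) * z.re ≤ 1 - t :=
    mul_le_of_le_one_right (by linarith) ((Complex.re_le_norm z).trans hz)
  simp only [Complex.sub_re, Complex.one_re, Complex.mul_re, Complex.sub_im, Complex.one_im,
    Complex.ofReal_re, Complex.ofReal_im, sub_zero, zero_mul]
  linarith

/-- For `1 < a ≤ 2`, `t ∈ [0,1)` and `z ∈ 𝔻`,
`Re((1-(1-t)z)^{a-1}) ≥ t^{a-1}` (principal branch). -/
theorem stmt16 (a t : ℝ) (ha1 : 1 < a) (ha2 : a ≤ 2) (ht : t ∈ Set.Ico (0 : ℝ) 1)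
    (z : ℂ) (hz : z ∈ Metric.ball (0 : ℂ) 1) :
    t ^ (a - 1) ≤ ((1 - (1 - (t : ℂ)) * z) ^ ((a : ℂ) - 1)).re := by
  have hre : t ≤ (1 - (1 - (t : ℂ)) * z).re :=
    le_re_one_sub_mul ht.2.le (mem_ball_zero_iff.mp hz).le
  calc t ^ (a - 1) ≤ (1 - (1 - (t : ℂ)) * z).re ^ (a - 1) :=
        Real.rpow_le_rpow ht.1 hre (by linarith)
    _ ≤ _ := by
      exact_mod_cast Complex.re_rpow_le_re_cpow (ht.1.trans hre) (σ := a - 1) (by linarith)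
        (by linarith)
end

section
/- There exists a Borel probability measure μ on [0,1), absolutely continuous with respect to Lebesgue measure and supported on [0,1/2], such that ∫_0^1 √(log(e/t)) dμ(t) = ∞ while ∫_0^1 μ[0,t) log(e/t) dμ(t) < ∞ and ∫_0^1 (1-t)^{-1} dμ(t) < ∞. -/
/-!
Write `L t = log (e / t)` and `F t = C / (√(L t) · log (L t))`, normalised so that `F (1/2) = 1`;
since `F (0+) = 0`, the density `F'` on `(0, 1/2]` gives a probability measure with
`μ [0, t) = F t`. Against `√L` the density is bounded below by `C / (2 t L log L)`, the derivative
of `-(C/2) log (log L)`, which tends to `-∞` at `0+`, so the first integral diverges. On the other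
hand `F · L · F' ≤ K / (t L (log L)²)`, the derivative of `K / log L`, which stays bounded; and
`(1 - t)⁻¹ ≤ 2` on the support.
-/

open MeasureTheory Set Filter Real
open scoped Topology ENNReal

section FTC

variable {g g' : ℝ → ℝ} {a b : ℝ}

theorem lintegral_Ioc_ofReal_deriv_of_nonneg (hab : a ≤ b) (hcont : ContinuousOn g (Icc a b))
    (hderiv : ∀ x ∈ Ioo a b, HasDerivAt g (g' x) x) (hpos : ∀ x ∈ Ioc a b, 0 ≤ g' x) :
    ∫⁻ x in Ioc a b, ENNReal.ofReal (g' x) = ENNReal.ofReal (g b - g a) := by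
  have hint : IntegrableOn g' (Ioc a b) :=
    intervalIntegral.integrableOn_deriv_of_nonneg hcont hderiv fun x hx ↦
      hpos x (Ioo_subset_Ioc_self hx)
  rw [← ofReal_integral_eq_lintegral_ofReal hint, ← intervalIntegral.integral_of_le hab,
    intervalIntegral.integral_eq_sub_of_hasDerivAt_of_le hab hcont hderiv
      (intervalIntegrable_iff_integrableOn_Ioc_of_le hab |>.2 hint)]
  exact ae_restrict_of_forall_mem measurableSet_Ioc hpos

theorem tendsto_ofReal_sub_lintegral_Ioc_ofReal_deriv (hab : a < b)
    (hderiv : ∀ x ∈ Ioc a b, HasDerivAt g (g' x) x) (hpos : ∀ x ∈ Ioc a b, 0 ≤ g' x) :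
    Tendsto (fun c ↦ ENNReal.ofReal (g b - g c)) (𝓝[>] a)
      (𝓝 (∫⁻ x in Ioc a b, ENNReal.ofReal (g' x))) := by
  have hmeas : AEMeasurable (fun x ↦ ENNReal.ofReal (g' x)) (volume.restrict (Ioc a b)) :=
    (measurable_deriv g).ennreal_ofReal.aemeasurable.congr <|
      ae_restrict_of_forall_mem measurableSet_Ioc fun x hx ↦ by simp only [(hderiv x hx).deriv]
  have hcover : AECover (volume.restrict (Ioc a b)) (𝓝[>] a) (fun c ↦ Ioc c b) :=
    aecover_Ioc_of_Ioc nhdsWithin_le_nhds tendsto_const_nhds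
  refine (hcover.lintegral_tendsto_of_countably_generated hmeas).congr' ?_
  filter_upwards [Ioo_mem_nhdsGT hab] with c hc
  rw [Measure.restrict_restrict measurableSet_Ioc, Ioc_inter_Ioc, sup_eq_left.2 hc.1.le, inf_idem,
    lintegral_Ioc_ofReal_deriv_of_nonneg hc.2.le ?_
      (fun x hx ↦ hderiv x ⟨hc.1.trans hx.1, hx.2.le⟩) (fun x hx ↦ hpos x ⟨hc.1.trans hx.1, hx.2⟩)]
  exact fun x hx ↦ (hderiv x ⟨hc.1.trans_le hx.1, hx.2⟩).continuousAt.continuousWithinAt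

theorem lintegral_Ioc_ofReal_deriv_of_tendsto {l : ℝ} (hab : a < b)
    (hderiv : ∀ x ∈ Ioc a b, HasDerivAt g (g' x) x) (hpos : ∀ x ∈ Ioc a b, 0 ≤ g' x)
    (hlim : Tendsto g (𝓝[>] a) (𝓝 l)) :
    ∫⁻ x in Ioc a b, ENNReal.ofReal (g' x) = ENNReal.ofReal (g b - l) :=
  tendsto_nhds_unique (tendsto_ofReal_sub_lintegral_Ioc_ofReal_deriv hab hderiv hpos)
    (ENNReal.tendsto_ofReal (tendsto_const_nhds.sub hlim))

theorem lintegral_Ioc_ofReal_deriv_eq_top_of_tendsto_atBot (hab : a < b)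
    (hderiv : ∀ x ∈ Ioc a b, HasDerivAt g (g' x) x) (hpos : ∀ x ∈ Ioc a b, 0 ≤ g' x)
    (hlim : Tendsto g (𝓝[>] a) atBot) :
    ∫⁻ x in Ioc a b, ENNReal.ofReal (g' x) = ∞ :=
  tendsto_nhds_unique (tendsto_ofReal_sub_lintegral_Ioc_ofReal_deriv hab hderiv hpos) <|
    ENNReal.tendsto_ofReal_atTop.comp <| by
      simpa [sub_eq_add_neg] using
        tendsto_atTop_add_const_left _ (g b) (tendsto_neg_atBot_atTop.comp hlim)

end FTC

namespace LogLogDensity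

noncomputable def logE (t : ℝ) : ℝ := 1 - log t

lemma log_exp_one_div {t : ℝ} (ht : t ≠ 0) : log (exp 1 / t) = logE t := by
  rw [log_div (exp_ne_zero 1) ht, log_exp, logE]

lemma hasDerivAt_logE {t : ℝ} (ht : t ≠ 0) : HasDerivAt logE (-t⁻¹) t :=
  (hasDerivAt_log ht).const_sub 1

@[fun_prop]
lemma measurable_logE : Measurable logE := by unfold logE; fun_prop

lemma one_lt_logE {t : ℝ} (ht0 : 0 < t) (ht1 : t < 1) : 1 < logE t := by
  have := log_neg ht0 ht1
  unfold logE; linarith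

lemma logE_half_le {t : ℝ} (ht0 : 0 < t) (ht : t ≤ 1 / 2) : logE (1 / 2) ≤ logE t := by
  unfold logE; linarith [log_le_log ht0 ht]

lemma tendsto_logE : Tendsto logE (𝓝[>] 0) atTop :=
  (tendsto_atTop_add_const_left _ 1 (tendsto_neg_atBot_atTop.comp tendsto_log_nhdsGT_zero)).congr
    fun t ↦ (sub_eq_add_neg 1 (log t)).symm

lemma tendsto_log_logE : Tendsto (fun t ↦ log (logE t)) (𝓝[>] 0) atTop :=
  tendsto_log_atTop.comp tendsto_logE

lemma hasDerivAt_log_logE {t : ℝ} (ht0 : 0 < t) (ht1 : t < 1) :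
    HasDerivAt (fun t ↦ log (logE t)) (-(t * logE t)⁻¹) t := by
  have hL := one_lt_logE ht0 ht1
  refine ((hasDerivAt_logE ht0.ne').log (by linarith)).congr_deriv ?_
  field_simp

noncomputable def normConst : ℝ := √(logE (1 / 2)) * log (logE (1 / 2))

lemma normConst_pos : 0 < normConst := by
  have hL := one_lt_logE (t := 1 / 2) (by norm_num) (by norm_num)
  have := log_pos hL
  unfold normConst; positivity

noncomputable def cdf (t : ℝ) : ℝ := normConst / (√(logE t) * log (logE t))

noncomputable def density (t : ℝ) : ℝ :=
  normConst * (log (logE t) + 2) / (2 * t * √(logE t) * logE t * log (logE t) ^ 2)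

lemma hasDerivAt_cdf {t : ℝ} (ht0 : 0 < t) (ht1 : t < 1) : HasDerivAt cdf (density t) t := by
  have hL := one_lt_logE ht0 ht1
  have hLL := log_pos hL
  have hsq : √(logE t) ^ 2 = logE t := sq_sqrt (by linarith)
  have hs : 0 < √(logE t) := sqrt_pos.2 (by linarith)
  have hden := ((hasDerivAt_logE ht0.ne').sqrt (by linarith)).mul (hasDerivAt_log_logE ht0 ht1)
  refine ((hasDerivAt_const t normConst).div hden (mul_pos hs hLL).ne').congr_deriv ?_
  simp only [density, Pi.mul_apply]
  field_simp
  rw [hsq]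
  ring

lemma density_nonneg {t : ℝ} (ht0 : 0 < t) (ht1 : t < 1) : 0 ≤ density t := by
  have hL := one_lt_logE ht0 ht1
  have hLL := log_pos hL
  have := normConst_pos
  unfold density; positivity

lemma cdf_nonneg {t : ℝ} (ht0 : 0 < t) (ht1 : t < 1) : 0 ≤ cdf t := by
  have hLL := log_pos (one_lt_logE ht0 ht1)
  have := normConst_pos
  unfold cdf; positivity

@[fun_prop]
lemma measurable_density : Measurable density := by unfold density; fun_prop

lemma cdf_half : cdf (1 / 2) = 1 := div_self normConst_pos.ne'

lemma tendsto_cdf : Tendsto cdf (𝓝[>] 0) (𝓝 0) := by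
  have hden : Tendsto (fun t ↦ √(logE t) * log (logE t)) (𝓝[>] 0) atTop :=
    (tendsto_sqrt_atTop.comp tendsto_logE).atTop_mul_atTop₀ tendsto_log_logE
  have h := hden.inv_tendsto_atTop.const_mul normConst
  rw [mul_zero] at h
  exact h.congr fun t ↦ (div_eq_mul_inv _ _).symm

lemma lintegral_density {t : ℝ} (ht0 : 0 < t) (ht1 : t < 1) :
    ∫⁻ s in Ioc 0 t, ENNReal.ofReal (density s) = ENNReal.ofReal (cdf t) := by
  rw [lintegral_Ioc_ofReal_deriv_of_tendsto ht0
    (fun s hs ↦ hasDerivAt_cdf hs.1 (hs.2.trans_lt ht1))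
    (fun s hs ↦ density_nonneg hs.1 (hs.2.trans_lt ht1)) tendsto_cdf, sub_zero]

noncomputable def measure : Measure ℝ :=
  (volume.restrict (Ioc 0 (1 / 2))).withDensity fun t ↦ ENNReal.ofReal (density t)

lemma measure_Ico {t : ℝ} (ht0 : 0 < t) (ht : t ≤ 1 / 2) :
    measure (Ico 0 t) = ENNReal.ofReal (cdf t) := by
  have hset : Ico 0 t ∩ Ioc 0 (1 / 2) = Ioo (0 : ℝ) t := by
    ext s
    simp only [mem_inter_iff, mem_Ico, mem_Ioc, mem_Ioo]
    constructor
    · rintro ⟨⟨-, hst⟩, hs0, -⟩; exact ⟨hs0, hst⟩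
    · rintro ⟨hs0, hst⟩; exact ⟨⟨hs0.le, hst⟩, hs0, by linarith⟩
  rw [measure, withDensity_apply _ measurableSet_Ico, Measure.restrict_restrict measurableSet_Ico,
    hset, setLIntegral_congr Ioo_ae_eq_Ioc, lintegral_density ht0 (by linarith)]

instance : IsProbabilityMeasure measure where
  measure_univ := by
    rw [measure, withDensity_apply _ MeasurableSet.univ, Measure.restrict_univ,
      lintegral_density (by norm_num) (by norm_num), cdf_half, ENNReal.ofReal_one]

lemma measure_compl_Icc : measure (Icc 0 (1 / 2))ᶜ = 0 := by
  refine withDensity_absolutelyContinuous _ _ ?_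
  rw [Measure.restrict_apply measurableSet_Icc.compl, ← sdiff_eq_compl_inter,
    sdiff_eq_empty.2 Ioc_subset_Icc_self, measure_empty]

lemma lintegral_measure {g : ℝ → ℝ≥0∞} (hg : Measurable g) :
    ∫⁻ t, g t ∂measure = ∫⁻ t in Ioc 0 (1 / 2), ENNReal.ofReal (density t) * g t :=
  lintegral_withDensity_eq_lintegral_mul _ (by fun_prop) hg

lemma hasDerivAt_log_log_logE {t : ℝ} (ht0 : 0 < t) (ht1 : t < 1) :
    HasDerivAt (fun t ↦ log (log (logE t))) (-(t * logE t * log (logE t))⁻¹) t := by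
  have hL := one_lt_logE ht0 ht1
  have hLL := log_pos hL
  refine ((hasDerivAt_log_logE ht0 ht1).log hLL.ne').congr_deriv ?_
  field_simp

lemma div_le_sqrt_logE_mul_density {t : ℝ} (ht0 : 0 < t) (ht1 : t < 1) :
    normConst / (2 * (t * logE t * log (logE t))) ≤ √(logE t) * density t := by
  have hL := one_lt_logE ht0 ht1
  have hLL := log_pos hL
  have := normConst_pos
  rw [div_le_iff₀ (by positivity), density]
  field_simp
  linarith

lemma lintegral_sqrt_log_eq_top :
    ∫⁻ t, ENNReal.ofReal √(log (exp 1 / t)) ∂measure = ∞ := by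
  have hderiv (t : ℝ) (ht : t ∈ Ioc (0 : ℝ) (1 / 2)) :
      HasDerivAt (fun t ↦ -(normConst / 2) * log (log (logE t)))
        (normConst / (2 * (t * logE t * log (logE t)))) t := by
    refine ((hasDerivAt_log_log_logE ht.1 (by linarith [ht.2])).const_mul
      (-(normConst / 2))).congr_deriv ?_
    field_simp
  have hlim : Tendsto (fun t ↦ -(normConst / 2) * log (log (logE t))) (𝓝[>] 0) atBot :=
    (tendsto_log_atTop.comp tendsto_log_logE).const_mul_atTop_of_neg
      (by linarith [normConst_pos])
  rw [lintegral_measure (by fun_prop), eq_top_iff,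
    ← lintegral_Ioc_ofReal_deriv_eq_top_of_tendsto_atBot (by norm_num) hderiv
      (fun t ht ↦ ?_) hlim]
  · refine setLIntegral_mono' measurableSet_Ioc fun t ht ↦ ?_
    have ht1 : t < 1 := by linarith [ht.2]
    rw [log_exp_one_div ht.1.ne', ← ENNReal.ofReal_mul (density_nonneg ht.1 ht1)]
    exact ENNReal.ofReal_le_ofReal <|
      (div_le_sqrt_logE_mul_density ht.1 ht1).trans_eq (mul_comm _ _)
  · have hL := one_lt_logE ht.1 (by linarith [ht.2])
    have := log_pos hL
    have := normConst_pos
    have := ht.1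
    positivity

lemma exists_cdf_mul_logE_mul_density_le : ∃ K : ℝ, 0 ≤ K ∧ ∀ t ∈ Ioc (0 : ℝ) (1 / 2),
    cdf t * (logE t * density t) ≤ K / (t * logE t * log (logE t) ^ 2) := by
  have hL₀ := one_lt_logE (t := 1 / 2) (by norm_num) (by norm_num)
  have hLL₀ := log_pos hL₀
  refine ⟨normConst ^ 2 * (1 / 2 + (log (logE (1 / 2)))⁻¹), by positivity, fun t ht ↦ ?_⟩
  have hL := one_lt_logE ht.1 (by linarith [ht.2])
  have hLL := log_pos hL
  have hv : log (logE (1 / 2)) ≤ log (logE t) :=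
    log_le_log (by linarith) (logE_half_le ht.1 ht.2)
  calc cdf t * (logE t * density t)
      = normConst ^ 2 * (1 / 2 + (log (logE t))⁻¹) / (t * logE t * log (logE t) ^ 2) := by
        rw [cdf, density]
        field_simp
        rw [sq_sqrt (by linarith)]
    _ ≤ _ := by
        have := ht.1
        gcongr

lemma hasDerivAt_div_log_logE {t : ℝ} (ht0 : 0 < t) (ht1 : t < 1) (K : ℝ) :
    HasDerivAt (fun t ↦ K / log (logE t)) (K / (t * logE t * log (logE t) ^ 2)) t := by
  have hLL := log_pos (one_lt_logE ht0 ht1)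
  refine ((hasDerivAt_const t K).div (hasDerivAt_log_logE ht0 ht1) hLL.ne').congr_deriv ?_
  field_simp
  ring

lemma lintegral_measure_Ico_mul_log_lt_top :
    ∫⁻ t, measure (Ico 0 t) * ENNReal.ofReal (log (exp 1 / t)) ∂measure < ∞ := by
  obtain ⟨K, hK, hbound⟩ := exists_cdf_mul_logE_mul_density_le
  have hmono : Monotone fun t : ℝ ↦ measure (Ico 0 t) :=
    fun a b hab ↦ measure_mono (Ico_subset_Ico_right hab)
  have hlim : Tendsto (fun t ↦ K / log (logE t)) (𝓝[>] 0) (𝓝 0) :=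
    tendsto_log_logE.const_div_atTop K
  have hmeas : Measurable fun t ↦ measure (Ico 0 t) * ENNReal.ofReal (log (exp 1 / t)) :=
    hmono.measurable.mul (by fun_prop)
  rw [lintegral_measure hmeas]
  calc _ ≤ ∫⁻ t in Ioc 0 (1 / 2), ENNReal.ofReal (K / (t * logE t * log (logE t) ^ 2)) := by
        refine setLIntegral_mono' measurableSet_Ioc fun t ht ↦ ?_
        have ht1 : t < 1 := by linarith [ht.2]
        rw [measure_Ico ht.1 ht.2, log_exp_one_div ht.1.ne',
          ← ENNReal.ofReal_mul (cdf_nonneg ht.1 ht1),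
          ← ENNReal.ofReal_mul (density_nonneg ht.1 ht1)]
        exact ENNReal.ofReal_le_ofReal (le_of_eq_of_le (by ring) (hbound t ht))
    _ = ENNReal.ofReal (K / log (logE (1 / 2)) - 0) :=
        lintegral_Ioc_ofReal_deriv_of_tendsto (by norm_num)
          (fun t ht ↦ hasDerivAt_div_log_logE ht.1 (by linarith [ht.2]) K)
          (fun t ht ↦ by
            have := ht.1
            have := one_lt_logE ht.1 (by linarith [ht.2])
            positivity) hlim
    _ < ∞ := ENNReal.ofReal_lt_top

lemma lintegral_inv_one_sub_lt_top : ∫⁻ t, ENNReal.ofReal ((1 - t)⁻¹) ∂measure < ∞ := by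
  have hbound : ∀ᵐ t ∂measure, ENNReal.ofReal ((1 - t)⁻¹) ≤ ENNReal.ofReal 2 := by
    filter_upwards [mem_ae_iff.2 measure_compl_Icc] with t ht
    exact ENNReal.ofReal_le_ofReal (inv_le_of_inv_le₀ (by norm_num) (by linarith [ht.2]))
  calc _ ≤ ∫⁻ _, ENNReal.ofReal 2 ∂measure := lintegral_mono_ae hbound
    _ < ∞ := by simp

end LogLogDensity

/-- There is a Borel probability measure `μ` on `[0,1)`, absolutely continuous with respect
to Lebesgue measure and supported on `[0,1/2]`, such that `∫ √(log(e/t)) dμ(t) = ⊤`, while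
`∫ μ[0,t) log(e/t) dμ(t) < ∞` and `∫ (1-t)⁻¹ dμ(t) < ∞`. -/
theorem stmt18 :
    ∃ μ : Measure ℝ, IsProbabilityMeasure μ ∧ μ ≪ volume ∧
      μ (Set.Icc (0 : ℝ) (1 / 2))ᶜ = 0 ∧
      (∫⁻ t, ENNReal.ofReal (Real.sqrt (Real.log (Real.exp 1 / t))) ∂μ = ⊤) ∧
      (∫⁻ t, μ (Set.Ico 0 t) * ENNReal.ofReal (Real.log (Real.exp 1 / t)) ∂μ < ⊤) ∧
      (∫⁻ t, ENNReal.ofReal ((1 - t)⁻¹) ∂μ < ⊤) :=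
  ⟨LogLogDensity.measure, inferInstance,
    (withDensity_absolutelyContinuous _ _).trans Measure.absolutelyContinuous_restrict,
    LogLogDensity.measure_compl_Icc, LogLogDensity.lintegral_sqrt_log_eq_top,
    LogLogDensity.lintegral_measure_Ico_mul_log_lt_top,
    LogLogDensity.lintegral_inv_one_sub_lt_top⟩
end
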